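/- Let g be a Lie algebra and M a right g-module (locally finite) and left g-comodule (locally conilpotent) which is an AYD module over g. Define the right R(g)-module structure m · f := f(m⟦−1⟧) m⟦0⟧ using the lifted U(g)-coaction, and the left R(g)-comodule structure by dualizing the U(g)-action: m⟪−1⟫(u) m⟪0⟫ = m · u. Then M is an AYD module over the Hopf algebra R(g) of representative functions on g: ∇_{R(g)}(m · f) = S(f(3)) m⟪−1⟫ f(1) ⊗ m⟪0⟫ · f(2). -/

import Mathlib

/-!
STATEMENT 13: Let `g` be a Lie algebra and `M` a locally finite right `g`-module and
locally conilpotent left `g`-comodule which is AYD over `g`.  Equivalently (and this is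
how we formalize it, since locally conilpotent `g`-comodules are exactly `U(g)`-comodules
and AYD over `g` is AYD over `U(g)`), let `H` be a cocommutative Hopf algebra (playing
the role of `U(g)`), and `M` a right `H`-module and left `H`-comodule which is AYD over
`H` and locally finite as an `H`-module.  Define the right `R(g)`-action by
`m · f := f(m⟦₋₁⟧) m⟦₀⟧` for every representative function `f` (a linear functional
whose kernel contains a two-sided ideal of finite codimension), and the left
`R(g)`-coaction by dualizing the `H`-action.  Then `M` is an AYD module over `R(g)`:
the AYD identity `∇_{R}(m·f) = S(f₍₃₎) m⟪₋₁⟫ f₍₁₎ ⊗ m⟪₀⟫ · f₍₂₎`, evaluated against an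
arbitrary `u ∈ H` (which determines it, since `R(g) ⊆ H*` separates via evaluations),
reads `(m·f)·u = f( u₍₃₎ · (m·u₍₂₎)⟦₋₁⟧ · S(u₍₁₎) ) (m·u₍₂₎)⟦₀⟧`.
-/

attribute [-instance] LieAlgebra.ofAssociativeAlgebra
open TensorProduct LinearMap Coalgebra
noncomputable section

variable {k : Type} [Field k]
variable {M : Type} [AddCommGroup M] [Module k M]

section Generic
variable {H : Type} [AddCommGroup H] [Module k H]

/-- Generic right module structure. -/
def IsModG (mul : H ⊗[k] H →ₗ[k] H) (one : H) (ρ : H →ₗ[k] M →ₗ[k] M) : Prop :=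
  ρ one = LinearMap.id ∧ ∀ x y : H, ρ (mul (x ⊗ₜ[k] y)) = (ρ y) ∘ₗ (ρ x)

/-- Generic left comodule structure. -/
def IsComodG (Δ : H →ₗ[k] H ⊗[k] H) (ε : H →ₗ[k] k) (cm : M →ₗ[k] H ⊗[k] M) : Prop :=
  ((TensorProduct.assoc k H H M).toLinearMap ∘ₗ (LinearMap.rTensor M Δ) ∘ₗ cm
      = (LinearMap.lTensor H cm) ∘ₗ cm) ∧
    ((TensorProduct.lid k M).toLinearMap ∘ₗ (LinearMap.rTensor M ε) ∘ₗ cm = LinearMap.id)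

/-- The right-hand side `S(h₍₃₎) m₍₋₁₎ h₍₁₎ ⊗ m₍₀₎ · h₍₂₎` of the AYD condition. -/
def aydRHS (mul : H ⊗[k] H →ₗ[k] H) (S : H →ₗ[k] H) (Δ : H →ₗ[k] H ⊗[k] H)
    (ρ : H →ₗ[k] M →ₗ[k] M) (cm : M →ₗ[k] H ⊗[k] M) (m : M) (h : H) : H ⊗[k] M :=
  (LinearMap.rTensor M (mul ∘ₗ (TensorProduct.comm k H H).toLinearMap))
    ((TensorProduct.assoc k H H M).symm.toLinearMap
      ((TensorProduct.map
          (mul ∘ₗ (TensorProduct.comm k H H).toLinearMap)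
          ((LinearMap.rTensor M S) ∘ₗ (LinearMap.lTensor H (TensorProduct.lift ρ)) ∘ₗ
            (TensorProduct.assoc k H H M).toLinearMap ∘ₗ
              (LinearMap.rTensor M (TensorProduct.comm k H H).toLinearMap)))
        ((TensorProduct.tensorTensorTensorComm k H (H ⊗[k] H) H M)
          ((LinearMap.rTensor (H ⊗[k] M) (TensorProduct.assoc k H H H).toLinearMap)
            (((LinearMap.rTensor H Δ) (Δ h)) ⊗ₜ[k] (cm m))))))

/-- The generic anti-Yetter–Drinfeld condition. -/
def IsAYDcond (mul : H ⊗[k] H →ₗ[k] H) (S : H →ₗ[k] H) (Δ : H →ₗ[k] H ⊗[k] H)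
    (ρ : H →ₗ[k] M →ₗ[k] M) (cm : M →ₗ[k] H ⊗[k] M) : Prop :=
  ∀ (m : M) (h : H), cm (ρ h m) = aydRHS mul S Δ ρ cm m h

end Generic

variable {H : Type} [Ring H] [HopfAlgebra k H]

variable (k H) in
/-- `f ∈ H*` is a representative function: its kernel contains a two-sided ideal of
finite codimension. -/
def IsRepresentative (f : H →ₗ[k] k) : Prop :=
  ∃ I : Submodule k H,
    (∀ x ∈ I, ∀ h : H, h * x ∈ I ∧ x * h ∈ I) ∧
    I ≤ LinearMap.ker f ∧
    FiniteDimensional k (H ⧸ I)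

/-!
Write `Δ²u = u₍₁₎ ⊗ u₍₂₎ ⊗ u₍₃₎`. Substituting the AYD condition for the coaction of `m · u₍₂₎`,
the right-hand side becomes `f(u₍₅₎ S(u₍₄₎) m₍₋₁₎ u₍₂₎ S(u₍₁₎)) m₍₀₎ · u₍₃₎`. In a cocommutative
Hopf algebra `∑ a₍₂₎ S(a₍₁₎) = ε(a)`, so both outer pairs of legs contract to the counit and what
remains is `f(m₍₋₁₎) m₍₀₎ · u`.
-/

open HopfAlgebra

theorem lid_rTensor_lTensor {R A N P : Type*} [CommSemiring R] [AddCommMonoid A] [Module R A]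
    [AddCommMonoid N] [Module R N] [AddCommMonoid P] [Module R P]
    (f : A →ₗ[R] R) (g : N →ₗ[R] P) (z : A ⊗[R] N) :
    TensorProduct.lid R P (rTensor P f (lTensor A g z))
      = g (TensorProduct.lid R N (rTensor N f z)) := by
  induction z using TensorProduct.induction_on with
  | zero => simp
  | tmul a n => simp
  | add z₁ z₂ h₁ h₂ => simp only [map_add, h₁, h₂]

theorem rTensor_lTensor_comul_comp_comul (R C : Type*) [CommSemiring R] [AddCommMonoid C]
    [Module R C] [Coalgebra R C] :
    rTensor C (lTensor C (rTensor C comul)) ∘ₗ rTensor C (lTensor C comul) ∘ₗ rTensor C comul ∘ₗ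
        comul
      = rTensor C (TensorProduct.assoc R C (C ⊗[R] C) C).toLinearMap ∘ₗ
          rTensor C (rTensor C (TensorProduct.assoc R C C C).toLinearMap) ∘ₗ
        (TensorProduct.assoc R ((C ⊗[R] C) ⊗[R] C) C C).symm.toLinearMap ∘ₗ
        map (rTensor C comul) comul ∘ₗ rTensor C (comul (R := R) (A := C)) ∘ₗ comul := by
  simp only [coassoc_simps]

section Cocommutative

variable {R A : Type*} [CommSemiring R] [Semiring A] [HopfAlgebra R A]

variable (R A) in
def swapMulAntipode : A ⊗[R] A →ₗ[R] A :=
  mul' R A ∘ₗ (antipode R).lTensor A ∘ₗ (TensorProduct.comm R A A).toLinearMap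

@[simp]
theorem swapMulAntipode_tmul (a b : A) : swapMulAntipode R A (a ⊗ₜ b) = b * antipode R a := rfl

variable [IsCocomm R A]

theorem swapMulAntipode_comp_comul :
    swapMulAntipode R A ∘ₗ comul = Algebra.linearMap R A ∘ₗ counit := by
  rw [swapMulAntipode, comp_assoc, comp_assoc, comm_comp_comul]
  exact mul_antipode_lTensor_comul

theorem map_swapMulAntipode_map_comul (u : A) :
    map ((swapMulAntipode R A).rTensor A) (swapMulAntipode R A)
        (map (comul.rTensor A) comul (comul.rTensor A (comul u)))
      = ((1 : A) ⊗ₜ[R] u) ⊗ₜ[R] (1 : A) := by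
  rw [← comp_apply (map _ _), ← map_comp, ← rTensor_comp, swapMulAntipode_comp_comul,
    ← comp_apply (map _ _), map_comp_rTensor, ← rTensor_comp_lTensor, comp_apply,
    lTensor_comp_apply, lTensor_counit_comul]
  simp [rTensor_comp_apply]

end Cocommutative

section AYD

variable {R A N : Type*} [CommSemiring R] [Semiring A] [HopfAlgebra R A]
  [AddCommMonoid N] [Module R N]

def aydContraction (ρ : A →ₗ[R] N →ₗ[R] N) :
    ((A ⊗[R] A) ⊗[R] A) ⊗[R] (A ⊗[R] N) →ₗ[R] A ⊗[R] N :=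
  rTensor N (mul' R A ∘ₗ (TensorProduct.comm R A A).toLinearMap) ∘ₗ
    (TensorProduct.assoc R A A N).symm.toLinearMap ∘ₗ
    map (mul' R A ∘ₗ (TensorProduct.comm R A A).toLinearMap)
      (rTensor N (antipode R) ∘ₗ lTensor A (lift ρ) ∘ₗ (TensorProduct.assoc R A A N).toLinearMap ∘ₗ
        rTensor N (TensorProduct.comm R A A).toLinearMap) ∘ₗ
    (tensorTensorTensorComm R A (A ⊗[R] A) A N).toLinearMap ∘ₗ
    rTensor (A ⊗[R] N) (TensorProduct.assoc R A A A).toLinearMap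

@[simp]
theorem aydContraction_tmul (ρ : A →ₗ[R] N →ₗ[R] N) (a b c y : A) (n : N) :
    aydContraction ρ (((a ⊗ₜ b) ⊗ₜ c) ⊗ₜ (y ⊗ₜ n)) = (antipode R c * (y * a)) ⊗ₜ ρ b n := by
  simp [aydContraction]

/-- The action `(y ⊗ n) ◁ h = S(h₍₃₎) y h₍₁₎ ⊗ n · h₍₂₎` of `A` on `A ⊗ N`. It is defined so that
`aydRHS … cm m h` unfolds to `aydAction ρ (cm m) h`, i.e. `IsAYDcond` reads
`cm (m · h) = cm m ◁ h`. -/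
def aydAction (ρ : A →ₗ[R] N →ₗ[R] N) (z : A ⊗[R] N) : A →ₗ[R] A ⊗[R] N :=
  (curry (aydContraction ρ)).flip z ∘ₗ rTensor A comul ∘ₗ comul

theorem aydAction_add (ρ : A →ₗ[R] N →ₗ[R] N) (z₁ z₂ : A ⊗[R] N) :
    aydAction ρ (z₁ + z₂) = aydAction ρ z₁ + aydAction ρ z₂ := by
  simp [aydAction, add_comp]

/-- `untwist c u = u₍₃₎ c(u₍₂₎)₍₋₁₎ S(u₍₁₎) ⊗ c(u₍₂₎)₍₀₎`, written exactly as in the conclusion of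
the theorem. -/
def untwist (c : A →ₗ[R] A ⊗[R] N) : A →ₗ[R] A ⊗[R] N :=
  rTensor N (mul' R A) ∘ₗ (TensorProduct.assoc R A A N).symm.toLinearMap ∘ₗ
    (TensorProduct.comm R (A ⊗[R] N) A).toLinearMap ∘ₗ
    rTensor A (rTensor N (mul' R A ∘ₗ (TensorProduct.comm R A A).toLinearMap) ∘ₗ
      (TensorProduct.assoc R A A N).symm.toLinearMap ∘ₗ rTensor (A ⊗[R] N) (antipode R) ∘ₗ
      lTensor A c) ∘ₗ
    rTensor A comul ∘ₗ comul

theorem untwist_add (c₁ c₂ : A →ₗ[R] A ⊗[R] N) :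
    untwist (c₁ + c₂) = untwist c₁ + untwist c₂ := by
  simp only [untwist, lTensor_add, comp_add, rTensor_add, add_comp]

variable [IsCocomm R A]

theorem untwist_aydAction_tmul (ρ : A →ₗ[R] N →ₗ[R] N) (y : A) (n : N) (u : A) :
    untwist (aydAction ρ (y ⊗ₜ n)) u = y ⊗ₜ ρ u n := by
  -- on the legs `((u₁ ⊗ u₂) ⊗ u₃) ⊗ (u₄ ⊗ u₅)` the left side is `u₅ S(u₄) y u₂ S(u₁) ⊗ n · u₃`
  have contract : untwist (aydAction ρ (y ⊗ₜ n))
      = map (mul' R A ∘ₗ (TensorProduct.comm R A A).toLinearMap ∘ₗ rTensor A (mulLeft R y))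
          (ρ.flip n) ∘ₗ (TensorProduct.rightComm R A A A).toLinearMap ∘ₗ
        map ((swapMulAntipode R A).rTensor A) (swapMulAntipode R A) ∘ₗ
        map (comul.rTensor A) comul ∘ₗ comul.rTensor A ∘ₗ comul := by
    simp only [untwist, aydAction, lTensor_comp, rTensor_comp, comp_assoc]
    rw [rTensor_lTensor_comul_comp_comul]
    simp only [← comp_assoc]
    congr 3
    ext a b c d e
    simp [mul_assoc]
  rw [contract]
  simp only [comp_apply]
  rw [map_swapMulAntipode_map_comul]
  simp

theorem untwist_aydAction (ρ : A →ₗ[R] N →ₗ[R] N) (z : A ⊗[R] N) (u : A) :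
    untwist (aydAction ρ z) u = lTensor A (ρ u) z := by
  induction z using TensorProduct.induction_on with
  | zero => simp [untwist, aydAction]
  | tmul y n => exact untwist_aydAction_tmul ρ y n u
  | add z₁ z₂ h₁ h₂ => rw [aydAction_add, untwist_add, LinearMap.add_apply, h₁, h₂, map_add]

end AYD

theorem AYD_over_representative_functions_general
    -- `H` is cocommutative (it plays the role of `U(g)`)
    (hcc : (TensorProduct.comm k H H).toLinearMap ∘ₗ (Coalgebra.comul (R := k) (A := H))
      = Coalgebra.comul (R := k) (A := H))
    -- a module-comodule `M` over `H`, AYD over `H`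
    (ρ : H →ₗ[k] M →ₗ[k] M) (cm : M →ₗ[k] H ⊗[k] M)
    (hayd : IsAYDcond (LinearMap.mul' k H) (HopfAlgebra.antipode (R := k) (A := H))
      (Coalgebra.comul (R := k) (A := H)) ρ cm) :
    -- then `M` is AYD over `R(g)`: for every representative function `f`, with
    -- `m · f := f(m⟦₋₁⟧) m⟦₀⟧`, the AYD identity over `R(g)` holds; evaluated on an
    -- arbitrary `u ∈ H` it reads
    -- `(m·f)·u = f( u₍₃₎ (m·u₍₂₎)⟦₋₁⟧ S(u₍₁₎) ) (m·u₍₂₎)⟦₀⟧`: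
    ∀ (f : H →ₗ[k] k), IsRepresentative k H f → ∀ (u : H) (m : M),
      ρ u ((TensorProduct.lid k M) ((LinearMap.rTensor M f) (cm m)))
        =
      (TensorProduct.lid k M)
        ((LinearMap.rTensor M f)
          ((LinearMap.rTensor M (LinearMap.mul' k H))
            ((TensorProduct.assoc k H H M).symm.toLinearMap
              ((TensorProduct.comm k (H ⊗[k] M) H).toLinearMap
                ((LinearMap.rTensor H
                    ((LinearMap.rTensor M
                        ((LinearMap.mul' k H) ∘ₗ (TensorProduct.comm k H H).toLinearMap)) ∘ₗ
                      (TensorProduct.assoc k H H M).symm.toLinearMap ∘ₗ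
                        (LinearMap.rTensor (H ⊗[k] M)
                          (HopfAlgebra.antipode (R := k) (A := H))) ∘ₗ
                          (LinearMap.lTensor H (cm ∘ₗ (ρ.flip m)))))
                  ((LinearMap.rTensor H (Coalgebra.comul (R := k) (A := H)))
                    (Coalgebra.comul (R := k) u))))))) := by
  intro f _ u m
  have : IsCocomm k H := ⟨hcc⟩
  have hcoact : cm ∘ₗ ρ.flip m = aydAction ρ (cm m) := LinearMap.ext (hayd m)
  change _ = TensorProduct.lid k M (rTensor M f (untwist (cm ∘ₗ ρ.flip m) u))
  rw [hcoact, untwist_aydAction, lid_rTensor_lTensor]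

theorem AYD_over_representative_functions
    -- `H` is cocommutative (it plays the role of `U(g)`)
    (hcc : (TensorProduct.comm k H H).toLinearMap ∘ₗ (Coalgebra.comul (R := k) (A := H))
      = Coalgebra.comul (R := k) (A := H))
    -- a module-comodule `M` over `H`, AYD over `H`
    (ρ : H →ₗ[k] M →ₗ[k] M) (cm : M →ₗ[k] H ⊗[k] M)
    (hmod : IsModG (LinearMap.mul' k H) 1 ρ)
    (hcomod : IsComodG (Coalgebra.comul (R := k) (A := H))
      (Coalgebra.counit (R := k) (A := H)) cm)
    (hayd : IsAYDcond (LinearMap.mul' k H) (HopfAlgebra.antipode (R := k) (A := H))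
      (Coalgebra.comul (R := k) (A := H)) ρ cm)
    -- locally finite `H`-module
    (hlf : ∀ m : M, ∃ N : Submodule k M,
      FiniteDimensional k ↥N ∧ m ∈ N ∧ ∀ (h : H), ∀ x ∈ N, ρ h x ∈ N) :
    -- then `M` is AYD over `R(g)`: for every representative function `f`, with
    -- `m · f := f(m⟦₋₁⟧) m⟦₀⟧`, the AYD identity over `R(g)` holds; evaluated on an
    -- arbitrary `u ∈ H` it reads
    -- `(m·f)·u = f( u₍₃₎ (m·u₍₂₎)⟦₋₁⟧ S(u₍₁₎) ) (m·u₍₂₎)⟦₀⟧`: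
    ∀ (f : H →ₗ[k] k), IsRepresentative k H f → ∀ (u : H) (m : M),
      ρ u ((TensorProduct.lid k M) ((LinearMap.rTensor M f) (cm m)))
        =
      (TensorProduct.lid k M)
        ((LinearMap.rTensor M f)
          ((LinearMap.rTensor M (LinearMap.mul' k H))
            ((TensorProduct.assoc k H H M).symm.toLinearMap
              ((TensorProduct.comm k (H ⊗[k] M) H).toLinearMap
                ((LinearMap.rTensor H
                    ((LinearMap.rTensor M
                        ((LinearMap.mul' k H) ∘ₗ (TensorProduct.comm k H H).toLinearMap)) ∘ₗ
                      (TensorProduct.assoc k H H M).symm.toLinearMap ∘ₗ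
                        (LinearMap.rTensor (H ⊗[k] M)
                          (HopfAlgebra.antipode (R := k) (A := H))) ∘ₗ
                          (LinearMap.lTensor H (cm ∘ₗ (ρ.flip m)))))
                  ((LinearMap.rTensor H (Coalgebra.comul (R := k) (A := H)))
                    (Coalgebra.comul (R := k) u))))))) :=
  AYD_over_representative_functions_general hcc ρ cm hayd

end
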